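/- arXiv:2111.00761 — 2 statements merged into one kernel-verified Lean document; each statement's English description precedes it below -/
import Mathlib

section
/- Let R be an integral domain and X an indeterminate over R. Then the formal power series ring R[[X]] is a big ideal domain if and only if R is a field. -/
/-- An ideal `I` of a commutative ring `R` is a *big ideal* if whenever `J ⊊ I`,
`J ^ n ⊊ I ^ n` for every positive integer `n`. -/
def Ideal.IsBig {R : Type*} [CommRing R] (I : Ideal R) : Prop :=
  ∀ J : Ideal R, J < I → ∀ n : ℕ, 1 ≤ n → J ^ n < I ^ n

/-- A commutative ring is a *big ideal ring* if every ideal is a big ideal. -/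
def IsBigIdealRing (R : Type*) [CommRing R] : Prop :=
  ∀ I : Ideal R, I.IsBig

/-!
Over a field, `R⟦X⟧` is a principal ideal domain, and principal ideals of a domain are big:
if `(b) ⊊ (a)` then `b = a c` with `c` a nonunit, so `bⁿ = aⁿ cⁿ` with `cⁿ` a nonunit.

Conversely, let `a` be a nonzero nonunit, `x = C a` and `y = X`. Removing `x²y²` from the
generators of `(x, y)⁴` gives `J = (x⁴, x³y, xy³, y⁴)`, and `J ⊊ (x, y)⁴` while
`((x, y)⁴)² = J²`, because `x²y²` times each generator of `(x, y)⁴` is a product of two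
generators of `J`. That `x²y² ∉ J` is seen on the coefficient of `X²` modulo `a³`.
-/

open Ideal

theorem Ideal.span_singleton_pow_lt_span_singleton_pow {S : Type*} [CommRing S] [IsDomain S]
    {a b : S} (h : span {b} < span {a}) {n : ℕ} (hn : n ≠ 0) :
    span {b} ^ n < span {a} ^ n := by
  rw [span_singleton_lt_span_singleton] at h
  obtain ⟨ha, c, hc, rfl⟩ := h
  rw [span_singleton_pow, span_singleton_pow, span_singleton_lt_span_singleton, mul_pow]
  exact ⟨pow_ne_zero n ha, c ^ n, by rwa [isUnit_pow_iff hn], rfl⟩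

theorem isBigIdealRing_of_isPrincipalIdealRing (S : Type*) [CommRing S] [IsDomain S]
    [IsPrincipalIdealRing S] : IsBigIdealRing S := by
  intro I J hJI n hn
  obtain ⟨a, rfl⟩ := (IsPrincipalIdealRing.principal I).principal
  obtain ⟨b, rfl⟩ := (IsPrincipalIdealRing.principal J).principal
  exact span_singleton_pow_lt_span_singleton_pow hJI (by omega)

theorem Ideal.span_insert_sq_eq {S : Type*} [CommRing S] {s : Set S} {b : S}
    (hbb : b * b ∈ span s ^ 2) (hbs : ∀ g ∈ s, b * g ∈ span s ^ 2) :
    span (insert b s) ^ 2 = span s ^ 2 := by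
  refine le_antisymm ?_ (pow_right_mono (span_mono (Set.subset_insert b s)) 2)
  rw [sq, span_mul_span', span_le]
  rintro _ ⟨u, hu, v, hv, rfl⟩
  rcases hu with rfl | hu <;> rcases hv with rfl | hv
  · exact hbb
  · exact hbs v hv
  · exact (mul_comm v u ▸ hbs u hu : u * v ∈ span s ^ 2)
  · exact sq (span s) ▸ mul_mem_mul (subset_span hu) (subset_span hv)

theorem not_isBigIdealRing_of_sq_mul_sq_notMem {S : Type*} [CommRing S] {x y : S}
    (h : x ^ 2 * y ^ 2 ∉ span {x ^ 4, x ^ 3 * y, x * y ^ 3, y ^ 4}) : ¬ IsBigIdealRing S := by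
  set s : Set S := {x ^ 4, x ^ 3 * y, x * y ^ 3, y ^ 4}
  have h₁ : x ^ 4 ∈ span s := subset_span (by simp [s])
  have h₂ : x ^ 3 * y ∈ span s := subset_span (by simp [s])
  have h₃ : x * y ^ 3 ∈ span s := subset_span (by simp [s])
  have h₄ : y ^ 4 ∈ span s := subset_span (by simp [s])
  have hmul {u v : S} (hu : u ∈ span s) (hv : v ∈ span s) : u * v ∈ span s ^ 2 :=
    sq (span s) ▸ mul_mem_mul hu hv
  have hsq : span (insert (x ^ 2 * y ^ 2) s) ^ 2 = span s ^ 2 := by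
    refine span_insert_sq_eq ?_ ?_
    · convert hmul h₁ h₄ using 1; ring
    · rintro g (rfl | rfl | rfl | rfl)
      · convert hmul h₂ h₂ using 1; ring
      · convert hmul h₁ h₃ using 1; ring
      · convert hmul h₂ h₄ using 1; ring
      · convert hmul h₃ h₃ using 1; ring
  have hlt : span s < span (insert (x ^ 2 * y ^ 2) s) :=
    (span_mono (Set.subset_insert _ s)).lt_of_not_ge
      fun hle => h (hle (subset_span (Set.mem_insert _ s)))
  exact fun hbig => (hbig _ _ hlt 2 one_le_two).ne hsq.symm

theorem PowerSeries.C_sq_mul_X_sq_notMem_span {R : Type*} [CommRing R] {a : R}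
    (ha : a ^ 2 ∉ span {a ^ 3}) :
    C a ^ 2 * X ^ 2 ∉ span {C a ^ 4, C a ^ 3 * X, C a * X ^ 3, (X : PowerSeries R) ^ 4} := by
  have hle : span {C a ^ 4, C a ^ 3 * X, C a * X ^ 3, (X : PowerSeries R) ^ 4} ≤
      span {C a ^ 3, X ^ 3} := by
    rw [span_le]
    rintro g (rfl | rfl | rfl | rfl) <;> rw [SetLike.mem_coe, mem_span_pair]
    exacts [⟨C a, 0, by ring⟩, ⟨X, 0, by ring⟩, ⟨0, C a, by ring⟩, ⟨0, X, by ring⟩]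
  intro hmem
  obtain ⟨f, g, hfg⟩ := mem_span_pair.1 (hle hmem)
  refine ha (mem_span_singleton'.2 ⟨coeff 2 f, ?_⟩)
  simpa [← map_pow, coeff_C_mul, mul_comm, coeff_mul_X_pow'] using congrArg (coeff 2) hfg

/-- **Theorem 2.11 (power series case).** Let `R` be an integral domain and `X` an
indeterminate over `R`.  Then `R[[X]]` is a big ideal domain if and only if `R` is a field. -/
theorem isBigIdealRing_powerSeries_iff_isField (R : Type*) [CommRing R] [IsDomain R] :
    IsBigIdealRing (PowerSeries R) ↔ IsField R := by
  refine ⟨fun hbig => ?_, fun hR => ?_⟩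
  · by_contra hR
    obtain ⟨a, ha0, ha⟩ := Ring.exists_not_isUnit_of_not_isField hR
    have hsq : a ^ 2 ∉ span {a ^ 3} := by
      rw [mem_span_singleton, pow_dvd_pow_iff ha0 ha]
      omega
    exact not_isBigIdealRing_of_sq_mul_sq_notMem (x := PowerSeries.C a) (y := PowerSeries.X)
      (PowerSeries.C_sq_mul_X_sq_notMem_span hsq) hbig
  · let := hR.toField
    exact isBigIdealRing_of_isPrincipalIdealRing (PowerSeries R)
end

section
/- Let A be a commutative ring, E an A-module, R = A⋉E, I an ideal of A and F an A-submodule of E with IE ⊆ F. If I⋉F is a big ideal of R, then I is a big ideal of A. -/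
open TrivSqZeroExt

/-- An ideal `I` of a commutative ring `R` is an *upper big ideal* if whenever `I ⊊ J`,
`I ^ n ⊊ J ^ n` for every positive integer `n`. -/
def Ideal.IsUpperBig {R : Type*} [CommRing R] (I : Ideal R) : Prop :=
  ∀ J : Ideal R, I < J → ∀ n : ℕ, 1 ≤ n → I ^ n < J ^ n

variable {A : Type*} [CommRing A] {E : Type*} [AddCommGroup E] [Module A E]
  [Module Aᵐᵒᵖ E] [IsCentralScalar A E]

/-- The idealization `I ⋉ F = {(a, e) : a ∈ I, e ∈ F}` of an ideal `I` of `A` and a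
submodule `F` of `E` with `I·E ⊆ F`, as an ideal of the trivial ring extension `A ⋉ E`. -/
def Ideal.idealize (I : Ideal A) (F : Submodule A E)
    (h : ∀ a ∈ I, ∀ e : E, a • e ∈ F) : Ideal (TrivSqZeroExt A E) where
  carrier := {x | x.fst ∈ I ∧ x.snd ∈ F}
  add_mem' ha hb := ⟨I.add_mem ha.1 hb.1, F.add_mem ha.2 hb.2⟩
  zero_mem' := ⟨I.zero_mem, F.zero_mem⟩
  smul_mem' c x hx := by
    refine ⟨?_, ?_⟩
    · rw [smul_eq_mul, fst_mul]
      exact I.mul_mem_left _ hx.1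
    · rw [smul_eq_mul, snd_mul]
      refine F.add_mem (F.smul_mem _ hx.2) ?_
      rw [op_smul_eq_smul]
      exact h _ hx.1 _

/-- For an ideal `L` of `A ⋉ E`, the ideal `I_L = {a ∈ A : (a, e) ∈ L for some e ∈ E}`
of `A`. -/
def Ideal.fstProj (L : Ideal (TrivSqZeroExt A E)) : Ideal A :=
  (L.restrictScalars A).map (fstHom A A E).toLinearMap

/-- For an ideal `L` of `A ⋉ E`, the submodule `F_L = {e ∈ E : (a, e) ∈ L for some a ∈ A}`
 of `E`. -/
def Ideal.sndProj (L : Ideal (TrivSqZeroExt A E)) : Submodule A E :=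
  (L.restrictScalars A).map (sndHom A E)

/-- `I_L · E ⊆ F_L`, so that `I_L ⋉ F_L` is an ideal of `A ⋉ E`. -/
theorem Ideal.fstProj_smul_mem_sndProj (L : Ideal (TrivSqZeroExt A E)) :
    ∀ a ∈ L.fstProj, ∀ e : E, a • e ∈ L.sndProj := by
  rintro a ha e
  obtain ⟨x, hx, rfl⟩ := ha
  exact ⟨x * inr e, L.mul_mem_right _ hx, by simp⟩

theorem Ideal.mem_idealize {I : Ideal A} {F : Submodule A E}
    {h : ∀ a ∈ I, ∀ e : E, a • e ∈ F} {x : TrivSqZeroExt A E} :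
    x ∈ I.idealize F h ↔ x.fst ∈ I ∧ x.snd ∈ F := Iff.rfl

theorem idealize_pow_fst_snd (I : Ideal A) (F : Submodule A E)
    (h : ∀ a ∈ I, ∀ e : E, a • e ∈ F) (m : ℕ) :
    ∀ x ∈ (I.idealize F h) ^ (m + 1), x.fst ∈ I ^ (m + 1) ∧ x.snd ∈ (I ^ m) • F := by
  induction m with
  | zero =>
    intro x hx
    rw [pow_one] at hx ⊢
    refine ⟨hx.1, ?_⟩
    rw [pow_zero, Ideal.one_eq_top, Submodule.top_smul]
    exact hx.2
  | succ m ih =>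
    intro x hx
    rw [pow_succ] at hx
    refine Submodule.mul_induction_on hx ?_ ?_
    · intro r hr s hs
      obtain ⟨hr1, hr2⟩ := ih r hr
      refine ⟨?_, ?_⟩
      · rw [fst_mul, pow_succ]
        exact Ideal.mul_mem_mul hr1 hs.1
      · rw [snd_mul]
        refine Submodule.add_mem _ (Submodule.smul_mem_smul hr1 hs.2) ?_
        rw [op_smul_eq_smul]
        have : s.fst • r.snd ∈ I • ((I ^ m) • F) :=
          Submodule.smul_mem_smul hs.1 hr2
        rwa [← Submodule.smul_assoc, smul_eq_mul, ← pow_succ'] at this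
    · intro y z hy hz
      exact ⟨by rw [fst_add]; exact add_mem hy.1 hz.1,
        by rw [snd_add]; exact add_mem hy.2 hz.2⟩

theorem inl_mem_idealize_pow (K : Ideal A) (F : Submodule A E)
    (h : ∀ a ∈ K, ∀ e : E, a • e ∈ F) (m : ℕ) :
    ∀ a ∈ K ^ m, (inl a : TrivSqZeroExt A E) ∈ (K.idealize F h) ^ m := by
  induction m with
  | zero => intro a ha; rw [pow_zero, Ideal.one_eq_top]; trivial
  | succ m ih =>
    intro a ha
    rw [pow_succ] at ha ⊢
    refine Submodule.mul_induction_on ha ?_ ?_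
    · intro b hb c hc
      rw [inl_mul]
      exact Ideal.mul_mem_mul (ih b hb) ⟨hc, F.zero_mem⟩
    · intro y z hy hz
      rw [inl_add]
      exact add_mem hy hz

theorem inr_mem_idealize_pow (K : Ideal A) (F : Submodule A E)
    (h : ∀ a ∈ K, ∀ e : E, a • e ∈ F) (m : ℕ) :
    ∀ e ∈ (K ^ m) • F, (inr e : TrivSqZeroExt A E) ∈ (K.idealize F h) ^ (m + 1) := by
  intro e he
  refine Submodule.smul_induction_on he ?_ ?_
  · intro r hr f hf
    rw [← inl_mul_inr, pow_succ]
    exact Ideal.mul_mem_mul (inl_mem_idealize_pow K F h m r hr) ⟨K.zero_mem, hf⟩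
  · intro y z hy hz
    rw [inr_add]
    exact add_mem hy hz

/-- **Theorem 4.2(1).**  Let `A` be a commutative ring, `E` an `A`-module,
`R = A ⋉ E`, `I` an ideal of `A` and `F` a submodule of `E` with `I·E ⊆ F`.
If `I ⋉ F` is a big ideal of `R`, then `I` is a big ideal of `A`. -/
theorem isBig_of_idealize_isBig (I : Ideal A) (F : Submodule A E)
    (hIE : ∀ a ∈ I, ∀ e : E, a • e ∈ F) (hbig : (I.idealize F hIE).IsBig) :
    I.IsBig := by
  intro J hJ n hn
  by_contra hcon
  have hle : J ≤ I := hJ.le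
  have hpowle : J ^ n ≤ I ^ n := Ideal.pow_right_mono hle n
  have heq : J ^ n = I ^ n := by
    by_contra hne
    exact hcon (lt_of_le_of_ne hpowle hne)
  obtain ⟨k, rfl⟩ : ∃ k, n = k + 1 := ⟨n - 1, by omega⟩
  -- J^k * I = J^(k+1)
  have hJkI : J ^ k * I = J ^ (k + 1) := by
    refine le_antisymm ?_ ?_
    · calc J ^ k * I ≤ I ^ k * I := Ideal.mul_mono_left (Ideal.pow_right_mono hle k)
        _ = I ^ (k + 1) := (pow_succ I k).symm
        _ = J ^ (k + 1) := heq.symm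
    · rw [pow_succ]
      exact Ideal.mul_mono_right hle
  have heq' : J ^ (k + 2) = I ^ (k + 2) := by
    have : I ^ (k + 2) = J ^ (k + 2) := by
      calc I ^ (k + 2) = I ^ (k + 1) * I := pow_succ I (k + 1)
        _ = J ^ (k + 1) * I := by rw [heq]
        _ = (J ^ k * J) * I := by rw [pow_succ]
        _ = (J ^ k * I) * J := by ring
        _ = J ^ (k + 1) * J := by rw [hJkI]
        _ = J ^ (k + 2) := (pow_succ J (k + 1)).symm
    exact this.symm
  have hJF : ∀ a ∈ J, ∀ e : E, a • e ∈ F := fun a ha e => hIE a (hle ha) e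
  have hLle : J.idealize F hJF ≤ I.idealize F hIE := fun x hx => ⟨hle hx.1, hx.2⟩
  have hLlt : J.idealize F hJF < I.idealize F hIE := by
    refine lt_of_le_of_ne hLle fun hEq => ?_
    obtain ⟨a, haI, haJ⟩ := SetLike.exists_of_lt hJ
    have : (inl a : TrivSqZeroExt A E) ∈ J.idealize F hJF := by
      rw [hEq]; exact ⟨haI, F.zero_mem⟩
    exact haJ this.1
  have hstrict := hbig _ hLlt (k + 2) (by omega)
  refine absurd hstrict (not_lt_of_ge ?_)
  intro x hx
  obtain ⟨hx1, hx2⟩ := idealize_pow_fst_snd I F hIE (k + 1) x hx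
  rw [← heq'] at hx1
  rw [← heq] at hx2
  have h1 := inl_mem_idealize_pow J F hJF (k + 2) x.fst hx1
  have h2 := inr_mem_idealize_pow J F hJF (k + 1) x.snd hx2
  have := add_mem h1 h2
  rwa [inl_fst_add_inr_snd_eq] at this
end
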